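/- Let U_1, U_2 be independent random variables uniformly distributed on [0,1], and let m, n be positive integers. Then Var[ ((m − 2n)/(mn))·(U_1(1 − U_1) + U_2(1 − U_2)) − (1/m)·|U_2 − U_1| ] = (m² − 2mn + 5n²)/(90 m² n²). -/

import Mathlib

open MeasureTheory ProbabilityTheory
open Set

noncomputable def μ01 : Measure ℝ := volume.restrict (Icc 0 1)

instance : IsProbabilityMeasure μ01 := ⟨by simp [μ01, Real.volume_Icc]⟩

lemma integrable_cont2 (g : ℝ × ℝ → ℝ) (hg : Continuous g) :
    Integrable g (μ01.prod μ01) := by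
  rw [μ01, Measure.prod_restrict, ← Measure.volume_eq_prod]
  exact hg.continuousOn.integrableOn_compact (isCompact_Icc.prod isCompact_Icc)

lemma fub (g : ℝ × ℝ → ℝ) (hg : Continuous g) :
    ∫ p, g p ∂(μ01.prod μ01) = ∫ u, (∫ v, g (u, v) ∂μ01) ∂μ01 :=
  integral_prod _ (integrable_cont2 g hg)

lemma fub' (g : ℝ × ℝ → ℝ) (hg : Continuous g) :
    ∫ p, g p ∂(μ01.prod μ01) = ∫ v, (∫ u, g (u, v) ∂μ01) ∂μ01 :=
  integral_prod_symm _ (integrable_cont2 g hg)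

lemma int1_eq (f : ℝ → ℝ) : ∫ x, f x ∂μ01 = ∫ x in (0:ℝ)..1, f x := by
  rw [μ01, show (∫ x in Icc (0:ℝ) 1, f x) = ∫ x in Set.Ioc (0:ℝ) 1, f x from
    integral_Icc_eq_integral_Ioc, intervalIntegral.integral_of_le zero_le_one]

lemma poly_int (a b c d e : ℝ) :
    ∫ x in (0:ℝ)..1, (a + b*x + c*x^2 + d*x^3 + e*x^4) = a + b/2 + c/3 + d/4 + e/5 := by
  have h : ∀ (r : ℝ) (k : ℕ), IntervalIntegrable (fun x : ℝ => r * x ^ k) volume 0 1 :=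
    fun r k => (continuous_const.mul (continuous_pow k)).intervalIntegrable _ _
  have h1 : IntervalIntegrable (fun x : ℝ => a) volume 0 1 := intervalIntegrable_const
  have h2 : IntervalIntegrable (fun x : ℝ => b * x) volume 0 1 :=
    (continuous_const.mul continuous_id).intervalIntegrable _ _
  rw [intervalIntegral.integral_add (((h1.add h2).add (h _ 2)).add (h _ 3)) (h _ 4),
    intervalIntegral.integral_add ((h1.add h2).add (h _ 2)) (h _ 3),
    intervalIntegral.integral_add (h1.add h2) (h _ 2),
    intervalIntegral.integral_add h1 h2]
  rw [intervalIntegral.integral_const_mul, intervalIntegral.integral_const_mul,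
    intervalIntegral.integral_const_mul, intervalIntegral.integral_const_mul]
  simp [integral_pow, integral_id]
  ring

lemma poly_eval (f : ℝ → ℝ) (a b c d e : ℝ)
    (hf : f = fun x => a + b*x + c*x^2 + d*x^3 + e*x^4) :
    ∫ x, f x ∂μ01 = a + b/2 + c/3 + d/4 + e/5 := by
  rw [int1_eq, hf, poly_int]

lemma habs (u : ℝ) (hu : u ∈ Icc (0:ℝ) 1) :
    ∫ v, |v - u| ∂μ01 = (u^2 + (1-u)^2)/2 := by
  obtain ⟨h0, h1⟩ := hu
  rw [int1_eq]
  have hi1 : IntervalIntegrable (fun v : ℝ => |v - u|) volume 0 u :=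
    ((continuous_id.sub continuous_const).abs).intervalIntegrable _ _
  have hi2 : IntervalIntegrable (fun v : ℝ => |v - u|) volume u 1 :=
    ((continuous_id.sub continuous_const).abs).intervalIntegrable _ _
  rw [← intervalIntegral.integral_add_adjacent_intervals hi1 hi2]
  have e1 : ∫ v in (0:ℝ)..u, |v - u| = ∫ v in (0:ℝ)..u, (u - v) := by
    apply intervalIntegral.integral_congr
    intro v hv
    rw [uIcc_of_le h0] at hv
    show |v - u| = u - v
    rw [abs_of_nonpos (by linarith [hv.2])]
    ring
  have e2 : ∫ v in u..(1:ℝ), |v - u| = ∫ v in u..(1:ℝ), (v - u) := by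
    apply intervalIntegral.integral_congr
    intro v hv
    rw [uIcc_of_le h1] at hv
    show |v - u| = v - u
    rw [abs_of_nonneg (by linarith [hv.1])]
  rw [e1, e2]
  rw [intervalIntegral.integral_sub intervalIntegrable_const
      (continuous_id'.intervalIntegrable _ _),
    intervalIntegral.integral_sub (continuous_id'.intervalIntegrable _ _)
      intervalIntegrable_const]
  simp [integral_id]
  ring

noncomputable def aa : ℝ → ℝ := fun x => x * (1 - x)

lemma aa_cont : Continuous aa := continuous_id'.mul (continuous_const.sub continuous_id')

lemma abs_cont : Continuous (fun p : ℝ × ℝ => |p.2 - p.1|) :=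
  (continuous_snd.sub continuous_fst).abs

lemma ae_mem01 : ∀ᵐ u ∂μ01, u ∈ Icc (0:ℝ) 1 := by
  rw [μ01]; exact ae_restrict_mem measurableSet_Icc

-- basic one-dimensional values
lemma vA1 : ∫ x, aa x ∂μ01 = 1/6 := by
  rw [poly_eval aa 0 1 (-1) 0 0 (funext fun x => by unfold aa; ring)]; norm_num

lemma vA2 : ∫ x, (aa x)^2 ∂μ01 = 1/30 := by
  rw [poly_eval _ 0 0 1 (-2) 1 (funext fun x => by unfold aa; ring)]; norm_num

lemma vH1 : ∫ x, ((x^2 + (1-x)^2)/2) ∂μ01 = 1/3 := by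
  rw [poly_eval _ (1/2) (-1) 1 0 0 (funext fun x => by ring)]; norm_num

lemma vC1 : ∫ x, aa x * ((x^2 + (1-x)^2)/2) ∂μ01 = 1/20 := by
  rw [poly_eval _ 0 (1/2) (-3/2) 2 (-1) (funext fun x => by unfold aa; ring)]; norm_num

lemma vP3 : ∫ x, (1/3 - x + x^2) ∂μ01 = 1/6 := by
  rw [poly_eval _ (1/3) (-1) 1 0 0 (funext fun x => by ring)]; norm_num

lemma vsq (u : ℝ) : ∫ v, (v - u)^2 ∂μ01 = 1/3 - u + u^2 := by
  rw [poly_eval _ (u^2) (-2*u) 1 0 0 (funext fun x => by ring)]; ring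

-- double integrals
lemma dI_fst (f : ℝ → ℝ) (hf : Continuous f) :
    ∫ p, f p.1 ∂(μ01.prod μ01) = ∫ x, f x ∂μ01 := by
  rw [fub (fun p => f p.1) (hf.comp continuous_fst)]; simp

lemma dI_snd (f : ℝ → ℝ) (hf : Continuous f) :
    ∫ p, f p.2 ∂(μ01.prod μ01) = ∫ x, f x ∂μ01 := by
  rw [fub' (fun p => f p.2) (hf.comp continuous_snd)]; simp

lemma dI_abs : ∫ p, |p.2 - p.1| ∂(μ01.prod μ01) = 1/3 := by
  rw [fub (fun p => |p.2 - p.1|) abs_cont]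
  have : ∫ u, (∫ v, |v - u| ∂μ01) ∂μ01 = ∫ u, ((u^2 + (1-u)^2)/2) ∂μ01 := by
    refine integral_congr_ae ?_
    filter_upwards [ae_mem01] with u hu
    exact habs u hu
  rw [this, vH1]

lemma dI_aabs1 : ∫ p, aa p.1 * |p.2 - p.1| ∂(μ01.prod μ01) = 1/20 := by
  rw [fub (fun p => aa p.1 * |p.2 - p.1|) ((aa_cont.comp continuous_fst).mul abs_cont)]
  have : ∫ u, (∫ v, aa u * |v - u| ∂μ01) ∂μ01
      = ∫ u, aa u * ((u^2 + (1-u)^2)/2) ∂μ01 := by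
    refine integral_congr_ae ?_
    filter_upwards [ae_mem01] with u hu
    rw [integral_const_mul, habs u hu]
  rw [this, vC1]

lemma dI_aabs2 : ∫ p, aa p.2 * |p.2 - p.1| ∂(μ01.prod μ01) = 1/20 := by
  rw [fub' (fun p => aa p.2 * |p.2 - p.1|) ((aa_cont.comp continuous_snd).mul abs_cont)]
  have : ∫ v, (∫ u, aa v * |v - u| ∂μ01) ∂μ01
      = ∫ v, aa v * ((v^2 + (1-v)^2)/2) ∂μ01 := by
    refine integral_congr_ae ?_
    filter_upwards [ae_mem01] with v hv
    have e : (fun u : ℝ => aa v * |v - u|) = fun u : ℝ => aa v * |u - v| :=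
      funext fun u => by rw [abs_sub_comm]
    rw [e, integral_const_mul, habs v hv]
  rw [this, vC1]

lemma dI_prodmul : ∫ p, aa p.1 * aa p.2 ∂(μ01.prod μ01) = 1/36 := by
  rw [integral_prod_mul aa aa, vA1]; norm_num

lemma dI_sq : ∫ p, (p.2 - p.1)^2 ∂(μ01.prod μ01) = 1/6 := by
  rw [fub (fun p => (p.2 - p.1)^2) ((continuous_snd.sub continuous_fst).pow 2)]
  have : ∫ u, (∫ v, (v - u)^2 ∂μ01) ∂μ01 = ∫ u, (1/3 - u + u^2) ∂μ01 :=
    integral_congr_ae (Filter.Eventually.of_forall fun u => vsq u)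
  rw [this, vP3]

noncomputable def gg (c d : ℝ) : ℝ × ℝ → ℝ :=
  fun p => c * (aa p.1 + aa p.2) - d * |p.2 - p.1|

lemma gg_cont (c d : ℝ) : Continuous (gg c d) :=
  (continuous_const.mul ((aa_cont.comp continuous_fst).add
    (aa_cont.comp continuous_snd))).sub (continuous_const.mul abs_cont)

lemma J1 (c d : ℝ) : ∫ p, gg c d p ∂(μ01.prod μ01) = c/3 - d/3 := by
  unfold gg
  rw [integral_sub
    (integrable_cont2 (fun p => c * (aa p.1 + aa p.2)) (continuous_const.mul
      ((aa_cont.comp continuous_fst).add (aa_cont.comp continuous_snd))))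
    (integrable_cont2 (fun p => d * |p.2 - p.1|) (continuous_const.mul abs_cont)),
    integral_const_mul, integral_const_mul,
    integral_add (integrable_cont2 (fun p => aa p.1) (aa_cont.comp continuous_fst))
      (integrable_cont2 (fun p => aa p.2) (aa_cont.comp continuous_snd)),
    dI_fst aa aa_cont, dI_snd aa aa_cont, vA1, dI_abs]
  ring

lemma J2 (c d : ℝ) :
    ∫ p, (gg c d p)^2 ∂(μ01.prod μ01) = 11*c^2/90 - c*d/5 + d^2/6 := by
  have key : (fun p => (gg c d p)^2)
      = fun p : ℝ × ℝ =>
        (c^2 * (aa p.1)^2 + c^2 * (aa p.2)^2 + 2*c^2 * (aa p.1 * aa p.2)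
          - (2*c*d * (aa p.1 * |p.2 - p.1|) + 2*c*d * (aa p.2 * |p.2 - p.1|)))
          + d^2 * (p.2 - p.1)^2 := by
    funext p
    have h := sq_abs (p.2 - p.1)
    unfold gg
    nlinarith [h]
  have c1 : Continuous fun p : ℝ × ℝ => c^2 * (aa p.1)^2 :=
    continuous_const.mul ((aa_cont.comp continuous_fst).pow 2)
  have c2 : Continuous fun p : ℝ × ℝ => c^2 * (aa p.2)^2 :=
    continuous_const.mul ((aa_cont.comp continuous_snd).pow 2)
  have c3 : Continuous fun p : ℝ × ℝ => 2*c^2 * (aa p.1 * aa p.2) :=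
    continuous_const.mul ((aa_cont.comp continuous_fst).mul (aa_cont.comp continuous_snd))
  have c4 : Continuous fun p : ℝ × ℝ => 2*c*d * (aa p.1 * |p.2 - p.1|) :=
    continuous_const.mul ((aa_cont.comp continuous_fst).mul abs_cont)
  have c5 : Continuous fun p : ℝ × ℝ => 2*c*d * (aa p.2 * |p.2 - p.1|) :=
    continuous_const.mul ((aa_cont.comp continuous_snd).mul abs_cont)
  have c6 : Continuous fun p : ℝ × ℝ => d^2 * (p.2 - p.1)^2 :=
    continuous_const.mul ((continuous_snd.sub continuous_fst).pow 2)
  rw [key]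
  rw [integral_add (integrable_cont2 _ (((c1.fun_add c2).fun_add c3).fun_sub (c4.fun_add c5)))
      (integrable_cont2 _ c6),
    integral_sub (integrable_cont2 _ ((c1.fun_add c2).fun_add c3))
      (integrable_cont2 _ (c4.fun_add c5)),
    integral_add (integrable_cont2 _ (c1.fun_add c2)) (integrable_cont2 _ c3),
    integral_add (integrable_cont2 _ c1) (integrable_cont2 _ c2),
    integral_add (integrable_cont2 _ c4) (integrable_cont2 _ c5),
    integral_const_mul, integral_const_mul, integral_const_mul, integral_const_mul,
    integral_const_mul, integral_const_mul,
    dI_fst (fun x => (aa x)^2) (aa_cont.pow 2), dI_snd (fun x => (aa x)^2) (aa_cont.pow 2), vA2,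
    dI_prodmul, dI_aabs1, dI_aabs2, dI_sq]
  ring

/-- For independent Uniform[0,1] random variables `U₁, U₂` and
positive integers `m, n`,
`Var[ ((m-2n)/(mn))(U₁(1-U₁) + U₂(1-U₂)) - (1/m)|U₂ - U₁| ]
  = (m² - 2mn + 5n²)/(90 m² n²)`. -/
theorem stmt16
    {Ω : Type*} [MeasurableSpace Ω] (P : Measure Ω) [IsProbabilityMeasure P]
    (U₁ U₂ : Ω → ℝ) (hm1 : Measurable U₁) (hm2 : Measurable U₂)
    (hIndep : IndepFun U₁ U₂ P)
    (hU₁ : P.map U₁ = volume.restrict (Set.Icc 0 1))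
    (hU₂ : P.map U₂ = volume.restrict (Set.Icc 0 1))
    (m n : ℕ) (hm : 0 < m) (hn : 0 < n) :
    variance (fun ω =>
        (((m : ℝ) - 2 * n) / ((m : ℝ) * n))
          * (U₁ ω * (1 - U₁ ω) + U₂ ω * (1 - U₂ ω))
        - (1 / (m : ℝ)) * |U₂ ω - U₁ ω|) P
      = ((m : ℝ)^2 - 2 * m * n + 5 * (n : ℝ)^2) / (90 * (m : ℝ)^2 * (n : ℝ)^2) := by
  set c : ℝ := ((m : ℝ) - 2 * n) / ((m : ℝ) * n) with hc
  set d : ℝ := 1 / (m : ℝ) with hd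
  have hmeas : Measurable (fun ω => (U₁ ω, U₂ ω)) := hm1.prodMk hm2
  have hmap : P.map (fun ω => (U₁ ω, U₂ ω)) = μ01.prod μ01 := by
    have h := (indepFun_iff_map_prod_eq_prod_map_map hm1.aemeasurable hm2.aemeasurable).mp hIndep
    rw [h, hU₁, hU₂]; rfl
  have hint : ∀ (f : ℝ × ℝ → ℝ), Continuous f →
      ∫ ω, f (U₁ ω, U₂ ω) ∂P = ∫ p, f p ∂(μ01.prod μ01) := by
    intro f hf
    rw [← hmap, integral_map hmeas.aemeasurable hf.aestronglyMeasurable]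
  show variance (fun ω => gg c d (U₁ ω, U₂ ω)) P = _
  have hset : MeasurableSet (Icc (0:ℝ) 1 ×ˢ Icc (0:ℝ) 1) :=
    measurableSet_Icc.prod measurableSet_Icc
  have haesq : ∀ᵐ ω ∂P, (U₁ ω, U₂ ω) ∈ Icc (0:ℝ) 1 ×ˢ Icc (0:ℝ) 1 := by
    rw [ae_iff]
    have h1 : {ω | ¬ (U₁ ω, U₂ ω) ∈ Icc (0:ℝ) 1 ×ˢ Icc (0:ℝ) 1}
        = (fun ω => (U₁ ω, U₂ ω)) ⁻¹' (Icc (0:ℝ) 1 ×ˢ Icc (0:ℝ) 1)ᶜ := rfl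
    rw [h1, ← Measure.map_apply hmeas hset.compl, hmap]
    rw [prob_compl_eq_zero_iff hset, Measure.prod_prod]
    simp [μ01, Real.volume_Icc]
  have hXm : AEStronglyMeasurable (fun ω => gg c d (U₁ ω, U₂ ω)) P :=
    ((gg_cont c d).measurable.comp hmeas).aestronglyMeasurable
  have hbound : ∀ᵐ ω ∂P, ‖gg c d (U₁ ω, U₂ ω)‖ ≤ |c| * 2 + |d| := by
    filter_upwards [haesq] with ω hω
    obtain ⟨⟨h1, h2⟩, h3, h4⟩ := hω
    have h5 : |aa (U₁ ω) + aa (U₂ ω)| ≤ 2 := by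
      rw [abs_le]; unfold aa; constructor <;> nlinarith
    have h6 : |U₂ ω - U₁ ω| ≤ 1 := by rw [abs_le]; constructor <;> linarith
    calc ‖gg c d (U₁ ω, U₂ ω)‖
        = |c * (aa (U₁ ω) + aa (U₂ ω)) - d * abs (U₂ ω - U₁ ω)| := rfl
      _ ≤ |c * (aa (U₁ ω) + aa (U₂ ω))| + |d * abs (U₂ ω - U₁ ω)| := abs_sub _ _
      _ = |c| * |aa (U₁ ω) + aa (U₂ ω)| + |d| * |abs (U₂ ω - U₁ ω)| := by
          rw [abs_mul, abs_mul]
      _ ≤ |c| * 2 + |d| * 1 := by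
          rw [abs_abs]
          have k1 := mul_le_mul_of_nonneg_left h5 (abs_nonneg c)
          have k2 := mul_le_mul_of_nonneg_left h6 (abs_nonneg d)
          linarith
      _ = |c| * 2 + |d| := by ring
  have hmem : MemLp (fun ω => gg c d (U₁ ω, U₂ ω)) 2 P :=
    MemLp.of_bound hXm _ hbound
  rw [variance_eq_sub hmem]
  have e1 : ∫ ω, gg c d (U₁ ω, U₂ ω) ∂P = c/3 - d/3 :=
    (hint _ (gg_cont c d)).trans (J1 c d)
  have e2 : ∫ ω, ((fun ω => gg c d (U₁ ω, U₂ ω)) ^ 2) ω ∂P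
      = 11*c^2/90 - c*d/5 + d^2/6 := by
    have : ∫ ω, (gg c d (U₁ ω, U₂ ω))^2 ∂P = 11*c^2/90 - c*d/5 + d^2/6 :=
      (hint (fun p => (gg c d p)^2) ((gg_cont c d).pow 2)).trans (J2 c d)
    simpa using this
  rw [e2, e1]
  have hm0 : (m : ℝ) ≠ 0 := Nat.cast_ne_zero.mpr hm.ne'
  have hn0 : (n : ℝ) ≠ 0 := Nat.cast_ne_zero.mpr hn.ne'
  rw [hc, hd]
  field_simp
  ring
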